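/- For a d-tuple T of bounded operators on H, the spherical Heinz transform T̂(t) is the zero tuple for some t ∈ (0,1) if and only if the generalized spherical Aluthge transform T̃(s) is the zero tuple for every s ∈ (0,1]. -/

import Mathlib

open ContinuousLinearMap

variable {H : Type*} [NormedAddCommGroup H] [InnerProductSpace ℂ H] [CompleteSpace H]

/-- `t`-th power of a positive operator, via the continuous functional calculus. -/
noncomputable def opPow (P : H →L[ℂ] H) (s : ℝ) : H →L[ℂ] H :=
  cfc (fun x : ℝ => x ^ s) P

/-!
Let `a ≤ b` and `P^a W P^b + P^b W P^a = 0`. Writing `P^b = P^a P^δ`, the operator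
`C = P^a W P^a` anticommutes with the positive operator `P^δ`, hence commutes with `P^{2δ}` and so
with its square root `P^δ`;
therefore `P^δ C = C P^δ = 0`, i.e. `P^a W P^b = 0`, and `P W P = 0`.
Since `W` vanishes on `ker P` and `range P` is dense in `(ker P)ᗮ`, this gives `P W = 0`; and
`ker P ⊆ ker P^s` for every `s > 0` because `ker P^a = ker P^(a/2)`. Conversely, `T̂(1/2) = T̃(1/2)`.
-/

theorem mul_eq_zero_of_nonneg_of_mul_add_mul_eq_zero {A : Type*} [CStarAlgebra A]
    [PartialOrder A] [StarOrderedRing A] {a c : A} (ha : 0 ≤ a) (h : a * c + c * a = 0) :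
    a * c = 0 := by
  have hac : a * c = -(c * a) := eq_neg_of_add_eq_zero_left h
  have hsq : Commute (a * a) c := by
    show a * a * c = c * (a * a)
    rw [mul_assoc, hac, mul_neg, ← mul_assoc, hac, neg_mul, neg_neg, mul_assoc]
  have hcomm : Commute a c := by
    have := hsq.cfc_nnreal NNReal.sqrt
    rwa [← CFC.sqrt_eq_cfc, CFC.sqrt_mul_self a] at this
  have h2 : (2 : ℝ) • (a * c) = 0 := by rw [two_smul]; nth_rw 2 [hcomm.eq]; exact h
  exact (smul_eq_zero.mp h2).resolve_left two_ne_zero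

theorem IsStarNormal.eq_zero_of_ker_le_of_comp_eq_zero {𝕜 E F : Type*} [RCLike 𝕜]
    [NormedAddCommGroup E] [InnerProductSpace 𝕜 E] [CompleteSpace E] [NormedAddCommGroup F]
    [NormedSpace 𝕜 F] {T : E →L[𝕜] E} (hT : IsStarNormal T) {B : E →L[𝕜] F}
    (hker : (T : E →ₗ[𝕜] E).ker ≤ (B : E →ₗ[𝕜] F).ker) (hBT : B ∘L T = 0) : B = 0 := by
  have hrange : (T : E →ₗ[𝕜] E).range ≤ (B : E →ₗ[𝕜] F).ker := by
    rintro _ ⟨x, rfl⟩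
    simpa using congr($hBT x)
  have hdense : ((T : E →ₗ[𝕜] E).ker ⊔ (T : E →ₗ[𝕜] E).range).topologicalClosure = ⊤ := by
    rw [Submodule.topologicalClosure_eq_top_iff, ← Submodule.inf_orthogonal,
      hT.orthogonal_range, inf_comm, Submodule.inf_orthogonal_eq_bot]
  have htop : (⊤ : Submodule 𝕜 E) ≤ (B : E →ₗ[𝕜] F).ker :=
    hdense ▸ Submodule.topologicalClosure_minimal _ (sup_le hker hrange) B.isClosed_ker
  ext x
  simpa using htop Submodule.mem_top

variable {P : H →L[ℂ] H}

theorem opPow_nonneg (hP : 0 ≤ P) (s : ℝ) : 0 ≤ opPow P s :=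
  cfc_nonneg fun _ hx => Real.rpow_nonneg (spectrum_nonneg_of_nonneg hP hx) s

theorem opPow_add (hP : 0 ≤ P) {a b : ℝ} (ha : 0 ≤ a) (hb : 0 ≤ b) :
    opPow P (a + b) = opPow P a * opPow P b := by
  rw [opPow, opPow, opPow, ← cfc_mul _ _ P (Real.continuous_rpow_const ha).continuousOn
    (Real.continuous_rpow_const hb).continuousOn]
  exact cfc_congr fun x hx =>
    Real.rpow_add_of_nonneg (spectrum_nonneg_of_nonneg hP hx) ha hb

theorem opPow_one (hP : 0 ≤ P) : opPow P 1 = P := by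
  rw [opPow, cfc_congr fun x _ => Real.rpow_one x]
  exact cfc_id' ℝ P

theorem opPow_half_apply_eq_zero (hP : 0 ≤ P) {a : ℝ} (ha : 0 ≤ a) {x : H}
    (hx : opPow P a x = 0) : opPow P (a / 2) x = 0 := by
  set Q := opPow P (a / 2)
  have hQ : adjoint Q ∘L Q = opPow P a := by
    rw [(opPow_nonneg hP _).isSelfAdjoint.adjoint_eq, ← mul_def, ← opPow_add hP (by linarith)
      (by linarith), add_halves]
  show x ∈ (Q : H →ₗ[ℂ] H).ker
  rw [← ker_adjoint_comp_self, hQ]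
  exact hx

theorem opPow_apply_eq_zero (hP : 0 ≤ P) {s : ℝ} (hs : 0 < s) {x : H} (hx : P x = 0) :
    opPow P s x = 0 := by
  have hdyadic : ∀ n : ℕ, opPow P ((1 / 2) ^ n) x = 0 := by
    intro n
    induction n with
    | zero => simpa [opPow_one hP] using hx
    | succ n ih =>
      rw [pow_succ, mul_one_div]
      exact opPow_half_apply_eq_zero hP (by positivity) ih
  obtain ⟨n, hn⟩ := exists_pow_lt_of_lt_one hs (by norm_num : (1 / 2 : ℝ) < 1)
  rw [← sub_add_cancel s ((1 / 2) ^ n), opPow_add hP (by linarith) (by positivity),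
    mul_apply_eq_comp, hdyadic n, map_zero]

theorem opPow_mul_mul_opPow_eq_zero_of_add_eq_zero (hP : 0 ≤ P) {a b : ℝ} (ha : 0 ≤ a)
    (hab : a ≤ b) {W : H →L[ℂ] H}
    (h : opPow P a * W * opPow P b + opPow P b * W * opPow P a = 0) :
    opPow P a * W * opPow P b = 0 := by
  obtain ⟨δ, hδ, rfl⟩ : ∃ δ, 0 ≤ δ ∧ b = a + δ := ⟨b - a, by linarith, by ring⟩
  set C := opPow P a * W * opPow P a
  have hright : opPow P a * W * opPow P (a + δ) = C * opPow P δ := by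
    rw [opPow_add hP ha hδ]; simp only [C, mul_assoc]
  have hleft : opPow P (a + δ) * W * opPow P a = opPow P δ * C := by
    rw [add_comm, opPow_add hP hδ ha]; simp only [C, mul_assoc]
  rw [hright, hleft, add_comm] at h
  rw [hright, eq_neg_of_add_eq_zero_right h,
    mul_eq_zero_of_nonneg_of_mul_add_mul_eq_zero (opPow_nonneg hP δ) h, neg_zero]

theorem mul_mul_self_eq_zero_of_opPow_add_eq_zero (hP : 0 ≤ P) {a b : ℝ} (ha : 0 ≤ a)
    (hb : 0 ≤ b) (hab : a + b = 1) {W : H →L[ℂ] H}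
    (h : opPow P a * W * opPow P b + opPow P b * W * opPow P a = 0) :
    P * W * P = 0 := by
  wlog hle : a ≤ b generalizing a b
  · exact this hb ha (by linarith) (by rwa [add_comm]) (by linarith)
  have hfactor : opPow P b * opPow P a = P := by
    rw [← opPow_add hP hb ha, add_comm, hab, opPow_one hP]
  calc P * W * P = opPow P b * opPow P a * W * (opPow P b * opPow P a) := by rw [hfactor]
    _ = opPow P b * (opPow P a * W * opPow P b) * opPow P a := by simp only [mul_assoc]
    _ = 0 := by rw [opPow_mul_mul_opPow_eq_zero_of_add_eq_zero hP ha hle h, mul_zero, zero_mul]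

theorem heinz_transform_eq_zero_iff_aluthge_transform_eq_zero_general
    {d : ℕ} (V : Fin d → H →L[ℂ] H) (P : H →L[ℂ] H)
    (hP : 0 ≤ P)
    (hV0 : ∀ i (x : H), P x = 0 → V i x = 0) :
    (∃ t ∈ Set.Ioo (0 : ℝ) 1, ∀ i,
        (1 / 2 : ℂ) • (opPow P t ∘L V i ∘L opPow P (1 - t)
          + opPow P (1 - t) ∘L V i ∘L opPow P t) = 0) ↔
      (∀ s ∈ Set.Ioc (0 : ℝ) 1, ∀ i, opPow P s ∘L V i ∘L opPow P (1 - s) = 0) := by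
  constructor
  · rintro ⟨t, ⟨ht0, ht1⟩, hheinz⟩ s ⟨hs0, -⟩ i
    have hPVP : P * V i * P = 0 :=
      mul_mul_self_eq_zero_of_opPow_add_eq_zero hP ht0.le (by linarith) (add_sub_cancel t 1) (by
        simpa only [smul_eq_zero, one_div, inv_eq_zero, two_ne_zero, false_or, ← mul_def,
          mul_assoc] using hheinz i)
    have hPV : P ∘L V i = 0 :=
      hP.isSelfAdjoint.isStarNormal.eq_zero_of_ker_le_of_comp_eq_zero
        (fun x hx => by simp [hV0 i x hx]) (by rw [← mul_def, ← mul_def, hPVP])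
    ext x
    simpa using opPow_apply_eq_zero hP hs0 congr($hPV (opPow P (1 - s) x))
  · intro h
    refine ⟨1 / 2, by norm_num, fun i => ?_⟩
    have h_half := h (1 / 2) (by norm_num) i
    rw [show (1 : ℝ) - 1 / 2 = 1 / 2 by norm_num] at h_half ⊢
    rw [h_half, add_zero, smul_zero]

/-- The spherical Heinz transform `T̂(t)` vanishes for some `t ∈ (0,1)` if and only if the
generalized spherical Aluthge transform `T̃(s)` vanishes for every `s ∈ (0,1]`. -/
theorem heinz_transform_eq_zero_iff_aluthge_transform_eq_zero
    {d : ℕ} (T V : Fin d → H →L[ℂ] H) (P : H →L[ℂ] H)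
    (hP : 0 ≤ P) (hP2 : P ∘L P = ∑ i, adjoint (T i) ∘L T i)
    (hT : ∀ i, T i = V i ∘L P)
    (hV : ∑ i, adjoint (V i) ∘L V i ≤ 1)
    (hV0 : ∀ i (x : H), P x = 0 → V i x = 0) :
    (∃ t ∈ Set.Ioo (0 : ℝ) 1, ∀ i,
        (1 / 2 : ℂ) • (opPow P t ∘L V i ∘L opPow P (1 - t)
          + opPow P (1 - t) ∘L V i ∘L opPow P t) = 0) ↔
      (∀ s ∈ Set.Ioc (0 : ℝ) 1, ∀ i, opPow P s ∘L V i ∘L opPow P (1 - s) = 0) :=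
  heinz_transform_eq_zero_iff_aluthge_transform_eq_zero_general V P hP hV0
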